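/- Let K ≥ 1 and let A, B ⊆ F_2^n be nonempty sets with Dbl(A,B) := |A+B|/(|A|^{1/2}|B|^{1/2}) ≤ K. If the quadruple (A,B,A,B) is not coherently (1/√(2K))-flat, then there exist A' ⊆ A and B' ⊆ B with |A'| ≫ K^{−10}|A|, |B'| ≫ K^{−10}|B|, and Dbl(A',B') ≤ K − (1/100)√K. -/
import Mathlib
set_option maxHeartbeats 1000000
set_option linter.unusedVariables false
set_option linter.deprecated false


open Finset Pointwise

/-- Fourier transform of the indicator of A ⊆ 𝔽₂ⁿ. -/
noncomputable def ftA {n : ℕ} (A : Finset (Fin n → ZMod 2)) (ξ : Fin n → ZMod 2) : ℝ :=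
  ((2 : ℝ) ^ n)⁻¹ * ∑ x ∈ A, (-1 : ℝ) ^ (∑ i, ξ i * x i : ZMod 2).val

/-- Spec_α(A) := {ξ : |1̂_A(ξ)| ≥ α|A|/2ⁿ}. -/
noncomputable def Spec {n : ℕ} (α : ℝ) (A : Finset (Fin n → ZMod 2)) :
    Set (Fin n → ZMod 2) :=
  {ξ | α * A.card / 2 ^ n ≤ |ftA A ξ|}

/-- Dbl(A,B) := |A+B| / (|A|^{1/2} |B|^{1/2}). -/
noncomputable def Dbl {n : ℕ} (A B : Finset (Fin n → ZMod 2)) : ℝ :=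
  ((A + B).card : ℝ) / (Real.sqrt A.card * Real.sqrt B.card)

def dotp {n : ℕ} (ξ x : Fin n → ZMod 2) : ZMod 2 := ∑ i, ξ i * x i

lemma dotp_add {n : ℕ} (ξ x y : Fin n → ZMod 2) :
    dotp ξ (x + y) = dotp ξ x + dotp ξ y := by
  unfold dotp
  rw [← Finset.sum_add_distrib]
  exact Finset.sum_congr rfl fun i _ => by simp [mul_add]

lemma zmod2_ne_iff : ∀ e u : ZMod 2, (¬ e = u) ↔ e = u + 1 := by decide

lemma part_card {n : ℕ} (A : Finset (Fin n → ZMod 2)) (ξ : Fin n → ZMod 2) (u : ZMod 2) :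
    (A.filter fun x => dotp ξ x = u).card + (A.filter fun x => dotp ξ x = u + 1).card
      = A.card := by
  have h : (A.filter fun x => dotp ξ x = u + 1) = A.filter fun x => ¬ dotp ξ x = u :=
    Finset.filter_congr fun x _ => (zmod2_ne_iff _ _).symm
  rw [h, Finset.card_filter_add_card_filter_not]

lemma ftA_eq {n : ℕ} (A : Finset (Fin n → ZMod 2)) (ξ : Fin n → ZMod 2) :
    ftA A ξ = (((A.filter fun x => dotp ξ x = 0).card : ℝ)
      - ((A.filter fun x => dotp ξ x = 1).card : ℝ)) / 2 ^ n := by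
  unfold ftA
  rw [← Finset.sum_filter_add_sum_filter_not A (fun x => dotp ξ x = 0)]
  have h1 : ∑ x ∈ A.filter (fun x => dotp ξ x = 0), (-1 : ℝ) ^ (∑ i, ξ i * x i : ZMod 2).val
      = ((A.filter fun x => dotp ξ x = 0).card : ℝ) := by
    rw [Finset.sum_congr rfl (fun x hx => ?_), Finset.sum_const, nsmul_eq_mul, mul_one]
    have := (Finset.mem_filter.mp hx).2
    unfold dotp at this
    rw [this]
    norm_num
  have h2 : ∑ x ∈ A.filter (fun x => ¬ dotp ξ x = 0), (-1 : ℝ) ^ (∑ i, ξ i * x i : ZMod 2).val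
      = -((A.filter fun x => ¬ dotp ξ x = 0).card : ℝ) := by
    rw [Finset.sum_congr rfl (fun x hx => ?_), Finset.sum_const, nsmul_eq_mul, mul_neg_one]
    have h3 := (zmod2_ne_iff _ _).mp (Finset.mem_filter.mp hx).2
    unfold dotp at h3
    rw [zero_add] at h3
    rw [h3]
    rw [show (1 : ZMod 2).val = 1 from rfl]
    norm_num
  have h4 : (A.filter fun x => ¬ dotp ξ x = 0) = A.filter fun x => dotp ξ x = 1 := by
    refine Finset.filter_congr fun x _ => ?_
    rw [zmod2_ne_iff]
    norm_num
  rw [h1, h2, h4]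
  field_simp
  ring

lemma spec_iff {n : ℕ} (α : ℝ) (A : Finset (Fin n → ZMod 2)) (ξ : Fin n → ZMod 2) :
    ξ ∈ Spec α A ↔ α * A.card ≤
      |((A.filter fun x => dotp ξ x = 0).card : ℝ)
        - ((A.filter fun x => dotp ξ x = 1).card : ℝ)| := by
  unfold Spec
  rw [Set.mem_setOf_eq, ftA_eq, abs_div, abs_of_pos (by positivity : (0:ℝ) < 2 ^ n)]
  exact div_le_div_iff_of_pos_right (by positivity)

lemma sum_card_le {n : ℕ} (A B : Finset (Fin n → ZMod 2)) (ξ : Fin n → ZMod 2)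
    (u v u' v' : ZMod 2) (h : u + v ≠ u' + v') :
    ((A.filter fun x => dotp ξ x = u) + (B.filter fun x => dotp ξ x = v)).card
      + ((A.filter fun x => dotp ξ x = u') + (B.filter fun x => dotp ξ x = v')).card
      ≤ (A + B).card := by
  set S := (A.filter fun x => dotp ξ x = u) + (B.filter fun x => dotp ξ x = v) with hS
  set T := (A.filter fun x => dotp ξ x = u') + (B.filter fun x => dotp ξ x = v') with hT
  have hSsub : S ⊆ A + B := Finset.add_subset_add (Finset.filter_subset _ _) (Finset.filter_subset _ _)
  have hTsub : T ⊆ A + B := Finset.add_subset_add (Finset.filter_subset _ _) (Finset.filter_subset _ _)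
  have hdisj : Disjoint S T := by
    rw [Finset.disjoint_left]
    intro z hzS hzT
    rw [hS, Finset.mem_add] at hzS
    rw [hT, Finset.mem_add] at hzT
    obtain ⟨x, hx, y, hy, hxy⟩ := hzS
    obtain ⟨x', hx', y', hy', hxy'⟩ := hzT
    apply h
    have e1 : dotp ξ z = u + v := by
      rw [← hxy, dotp_add, (Finset.mem_filter.mp hx).2, (Finset.mem_filter.mp hy).2]
    have e2 : dotp ξ z = u' + v' := by
      rw [← hxy', dotp_add, (Finset.mem_filter.mp hx').2, (Finset.mem_filter.mp hy').2]
    rw [← e1, ← e2]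
  calc S.card + T.card = (S ∪ T).card := (Finset.card_union_of_disjoint hdisj).symm
    _ ≤ (A + B).card := Finset.card_le_card (Finset.union_subset hSsub hTsub)

lemma Dbl_comm {n : ℕ} (A B : Finset (Fin n → ZMod 2)) : Dbl A B = Dbl B A := by
  unfold Dbl
  rw [add_comm, mul_comm]
lemma arithEnd (k K' a b X ρ : ℝ) (hk : 1 ≤ k) (hK' : K' = k^2 - k/100)
    (hapos : 0 < a) (hbpos : 0 < b) (hρ : ρ^2 = a*b) (hρ0 : 0 ≤ ρ) (hX0 : 0 ≤ X)
    (hX2 : (1364/1000)*(a*b) ≤ X^2) (h : K'*X < k^2*ρ) : False := by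
  have hK'pos : 0 < K' := by nlinarith
  have h1 : (K'*X)^2 < (k^2*ρ)^2 := by
    have h0 : 0 ≤ K'*X := mul_nonneg hK'pos.le hX0
    nlinarith [h, h0]
  have hab : 0 < a*b := mul_pos hapos hbpos
  have hpoly : k^4 < (1364/1000)*K'^2 := by rw [hK']; nlinarith
  nlinarith [h1, mul_le_mul_of_nonneg_left hX2 (sq_nonneg K'),
    mul_lt_mul_of_pos_right hpoly hab]


lemma twopq (a p q : ℝ) (hp : 0 ≤ p) (hq : 0 ≤ q) (ha : p^2+q^2 = a) (hapos : 0 < a)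
    (hhi : p^2 - q^2 < (9/10)*a) (hD : 0 ≤ p^2 - q^2) : (4358/10000)*a ≤ 2*(p*q) := by
  have h4 : (19/100)*a^2 < (2*(p*q))^2 := by nlinarith [sq_nonneg (p*q), sq_nonneg (p^2-q^2)]
  nlinarith [h4, mul_nonneg hp hq]

lemma arithMain (k K' a b p q r s ρ : ℝ) (hk : 1 ≤ k) (hK' : K' = k^2 - k/100)
    (hp : 0 ≤ p) (hq : 0 ≤ q) (hr : 0 ≤ r) (hs : 0 ≤ s)
    (ha : p^2 + q^2 = a) (hb : r^2 + s^2 = b)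
    (hqp : q ≤ p) (hsr : s ≤ r)
    (hapos : 0 < a) (hbpos : 0 < b)
    (hρ : ρ^2 = a*b) (hρ0 : 0 ≤ ρ)
    (hlo : a ≤ (14143/10000) * k * (p^2 - q^2))
    (hhi : p^2 - q^2 < (9/10)*a)
    (hI : K' * (p*r) + K' * (q*r) < k^2 * ρ)
    (hII : K' * (p*r) + K' * (p*s) < k^2 * ρ) : False := by
  have hk0 : (0:ℝ) ≤ k := by linarith
  have hk1 : (0:ℝ) ≤ k - 1 := by linarith
  have hD : 0 ≤ p^2 - q^2 := by nlinarith
  have hpq : (4358/10000)*a ≤ 2*(p*q) := twopq a p q hp hq ha hapos hhi hD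
  have hpq0 : 0 ≤ 2*(p*q) := by positivity
  have hy0 : 0 ≤ (p^2 - q^2) + 2*(p*q) := add_nonneg hD hpq0
  have hw0 : 0 ≤ k*(p^2-q^2) := mul_nonneg hk0 hD
  have hyeq : k*((p^2-q^2)+2*(p*q))^2 = k*a^2 + 2*(2*(p*q))*(k*(p^2-q^2)) := by
    rw [← ha]; ring
  have m1 : 0 ≤ (2*(p*q) - 4358/10000*a) * (k*(p^2-q^2)) :=
    mul_nonneg (by linarith) hw0
  have m2 : 0 ≤ ((14143/10000)*(k*(p^2-q^2)) - a) * a :=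
    mul_nonneg (by linarith [hlo]) hapos.le
  have hy2 : a^2*k + (61/100)*a^2 ≤ k * ((p^2 - q^2) + 2*(p*q))^2 := by
    nlinarith [hyeq, m1, m2]
  obtain ⟨Y, hYdef⟩ : ∃ Y, Y = (p^2 - q^2) + 2*(p*q) := ⟨_, rfl⟩
  rw [← hYdef] at hy2 hy0
  have hy3 : a*(k + 26/100) ≤ k*Y := by
    by_contra h'
    push_neg at h'
    have h0 : 0 ≤ k*Y := mul_nonneg hk0 hy0
    have hsq : (k*Y)^2 < (a*(k + 26/100))^2 := by
      apply pow_lt_pow_left₀ h' h0 (by norm_num)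
    have h2 := mul_le_mul_of_nonneg_left hy2 hk0
    nlinarith [h2, hsq, mul_pos hapos hapos, hk,
      mul_nonneg (mul_pos hapos hapos).le hk1]
  rw [hYdef] at hy3
  have hak : k*(p^2+q^2) = k*a := by rw [ha]
  have hpp : a*(2*k + 26/100) ≤ 2*(k*(p^2 + p*q)) := by nlinarith [hy3, hak]
  have hrr : b ≤ r^2 + r*s := by nlinarith [mul_nonneg (sub_nonneg.2 hsr) hs]
  have hK'pos : 0 < K' := by
    rw [hK']; nlinarith [mul_nonneg hk0 hk1]
  have hI' : K' * ((p+q)*r) < k^2 * ρ := by nlinarith [hI]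
  have hII' : K' * (p*(r+s)) < k^2 * ρ := by nlinarith [hII]
  have hprod : (K'*((p+q)*r)) * (K'*(p*(r+s))) < (k^2*ρ)*(k^2*ρ) :=
    mul_lt_mul'' hI' hII' (by positivity) (by positivity)
  have hprod2 : K'^2*((p^2+p*q)*(r^2+r*s)) < k^4*(a*b) := by
    have e1 : (K'*((p+q)*r))*(K'*(p*(r+s))) = K'^2*((p^2+p*q)*(r^2+r*s)) := by ring
    have e2 : (k^2*ρ)*(k^2*ρ) = k^4*ρ^2 := by ring
    rw [e1, e2, hρ] at hprod
    exact hprod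
  have hpp0 : 0 ≤ 2*(k*(p^2+p*q)) := by positivity
  have hmm : (a*(2*k + 26/100))*b ≤ (2*(k*(p^2+p*q)))*(r^2+r*s) :=
    mul_le_mul hpp hrr hbpos.le hpp0
  have hab : 0 < a*b := mul_pos hapos hbpos
  have hpoly2 : 2*k^5 < (2*k + 26/100)*K'^2 := by
    rw [hK']
    have e : (2*k + 26/100)*(k^2-k/100)^2 - 2*k^5
        = k^2*((22/100)*k^2 - (5/1000)*k + 26/1000000) := by ring
    have h1 : 0 < (22/100)*k^2 - (5/1000)*k + 26/1000000 := by nlinarith only [mul_nonneg hk1 hk0, hk]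
    have h2 : 0 < k^2 := by positivity
    linarith only [e, mul_pos h2 h1]
  have hstep := mul_le_mul_of_nonneg_left hmm (sq_nonneg K')
  have hstep2 := mul_lt_mul_of_pos_left hprod2 (by linarith : (0:ℝ) < 2*k)
  have hpoly2ab := mul_lt_mul_of_pos_right hpoly2 hab
  nlinarith only [hstep, hstep2, hpoly2ab]

lemma zadd1 : ∀ a c : ZMod 2, a + c ≠ a + 1 + c := by decide
lemma zadd2 : ∀ a c : ZMod 2, a + c ≠ a + (c + 1) := by decide

lemma mainS1 {n : ℕ} (K : ℝ) (A B : Finset (Fin n → ZMod 2)) (ξ : Fin n → ZMod 2)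
    (u w v v' : ZMod 2) (hw : w = u + 1) (hv' : v' = v + 1)
    (hK : 1 ≤ K) (hA : A.Nonempty) (hB : B.Nonempty)
    (hDbl : Dbl A B ≤ K)
    (hbad : ∀ A' B', A' ⊆ A → B' ⊆ B →
      (1/20) * K ^ (-10:ℝ) * A.card ≤ A'.card →
      (1/20) * K ^ (-10:ℝ) * B.card ≤ B'.card →
      K - (1/100) * Real.sqrt K < Dbl A' B')
    (hBle : ((B.filter fun x => dotp ξ x = v').card : ℝ) ≤ (B.filter fun x => dotp ξ x = v).card)
    (hlo : (1 / Real.sqrt (2*K)) * A.card ≤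
      ((A.filter fun x => dotp ξ x = u).card : ℝ) - (A.filter fun x => dotp ξ x = w).card)
    (hhi : ((A.filter fun x => dotp ξ x = u).card : ℝ) - (A.filter fun x => dotp ξ x = w).card
      < (9/10) * A.card) : False := by
  set A0 := A.filter (fun x => dotp ξ x = u) with hA0def
  set A1 := A.filter (fun x => dotp ξ x = w) with hA1def
  set B0 := B.filter (fun x => dotp ξ x = v) with hB0def
  set B1 := B.filter (fun x => dotp ξ x = v') with hB1def
  have haa : (A0.card : ℝ) + A1.card = A.card := by
    rw [hA0def, hA1def, hw]; exact_mod_cast part_card A ξ u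
  have hbb : (B0.card : ℝ) + B1.card = B.card := by
    rw [hB0def, hB1def, hv']; exact_mod_cast part_card B ξ v
  have apos : (0:ℝ) < A.card := by exact_mod_cast Finset.card_pos.2 hA
  have bpos : (0:ℝ) < B.card := by exact_mod_cast Finset.card_pos.2 hB
  have hK0 : (0:ℝ) < K := lt_of_lt_of_le one_pos hK
  set k := Real.sqrt K with hkdef
  have hk2 : k^2 = K := Real.sq_sqrt hK0.le
  have hk0 : (0:ℝ) ≤ k := Real.sqrt_nonneg K
  have hk1 : (1:ℝ) ≤ k := by nlinarith only [hk2, hk0, hK]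
  have hKpow1 : K ^ (-10:ℝ) ≤ 1 := Real.rpow_le_one_of_one_le_of_nonpos hK (by norm_num)
  have hKpow0 : 0 < K ^ (-10:ℝ) := Real.rpow_pos_of_pos hK0 _
  have h2K0 : (0:ℝ) < Real.sqrt (2*K) := Real.sqrt_pos.2 (by linarith)
  have hs2K : Real.sqrt (2*K) ≤ (14143/10000)*k := by
    rw [show (14143/10000)*k = Real.sqrt (((14143/10000)*k)^2) from
      (Real.sqrt_sq (by positivity)).symm]
    apply Real.sqrt_le_sqrt
    nlinarith only [hk2, hk0]
  have hD0 : (0:ℝ) < (A0.card:ℝ) - A1.card := lt_of_lt_of_le (by positivity) hlo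
  have hloA : (A.card:ℝ) ≤ (14143/10000)*k*((A0.card:ℝ) - A1.card) := by
    have h1 : (A.card:ℝ) ≤ Real.sqrt (2*K) * ((A0.card:ℝ) - A1.card) := by
      calc (A.card:ℝ) = Real.sqrt (2*K) * ((1/Real.sqrt (2*K)) * A.card) := by
            field_simp
        _ ≤ Real.sqrt (2*K) * ((A0.card:ℝ) - A1.card) :=
            mul_le_mul_of_nonneg_left hlo h2K0.le
    calc (A.card:ℝ) ≤ Real.sqrt (2*K) * ((A0.card:ℝ) - A1.card) := h1
      _ ≤ (14143/10000)*k*((A0.card:ℝ) - A1.card) :=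
          mul_le_mul_of_nonneg_right hs2K hD0.le
  have hKa := mul_le_mul_of_nonneg_right hKpow1 apos.le
  have hKb := mul_le_mul_of_nonneg_right hKpow1 bpos.le
  have sA0 : (1/20) * K ^ (-10:ℝ) * A.card ≤ (A0.card:ℝ) := by
    nlinarith only [hKa, apos, haa, hD0]
  have sA1 : (1/20) * K ^ (-10:ℝ) * A.card ≤ (A1.card:ℝ) := by
    nlinarith only [hKa, apos, haa, hhi]
  have sB0 : (1/20) * K ^ (-10:ℝ) * B.card ≤ (B0.card:ℝ) := by
    nlinarith only [hKb, bpos, hbb, hBle]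
  have hsz : (0:ℝ) < (1/20) * K ^ (-10:ℝ) * A.card := by positivity
  have hszb : (0:ℝ) < (1/20) * K ^ (-10:ℝ) * B.card := by positivity
  have a0pos : (0:ℝ) < (A0.card:ℝ) := lt_of_lt_of_le hsz sA0
  have a1pos : (0:ℝ) < (A1.card:ℝ) := lt_of_lt_of_le hsz sA1
  have b0pos : (0:ℝ) < (B0.card:ℝ) := lt_of_lt_of_le hszb sB0
  set p := Real.sqrt (A0.card:ℝ) with hpdef
  set q := Real.sqrt (A1.card:ℝ) with hqdef
  set r := Real.sqrt (B0.card:ℝ) with hrdef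
  set s := Real.sqrt (B1.card:ℝ) with hsdef
  have hp2 : p^2 = (A0.card:ℝ) := Real.sq_sqrt (by positivity)
  have hq2 : q^2 = (A1.card:ℝ) := Real.sq_sqrt (by positivity)
  have hr2 : r^2 = (B0.card:ℝ) := Real.sq_sqrt (by positivity)
  have hs2 : s^2 = (B1.card:ℝ) := Real.sq_sqrt (by positivity)
  have hp0 : 0 ≤ p := Real.sqrt_nonneg _
  have hq0 : 0 ≤ q := Real.sqrt_nonneg _
  have hr0 : 0 ≤ r := Real.sqrt_nonneg _
  have hs0 : 0 ≤ s := Real.sqrt_nonneg _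
  set ρ := Real.sqrt (A.card:ℝ) * Real.sqrt (B.card:ℝ) with hρdef
  have hρ : ρ^2 = (A.card:ℝ) * (B.card:ℝ) := by
    rw [hρdef, mul_pow, Real.sq_sqrt apos.le, Real.sq_sqrt bpos.le]
  have hρ0 : 0 ≤ ρ := by positivity
  have hABcard : ((A+B).card:ℝ) ≤ K * ρ := by
    have h := hDbl
    unfold Dbl at h
    rw [div_le_iff₀ (by positivity)] at h
    exact h
  have bad00 : (K - (1/100)*k) * (p*r) < ((A0+B0).card : ℝ) := by
    have h := hbad A0 B0 (Finset.filter_subset _ _) (Finset.filter_subset _ _) sA0 sB0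
    unfold Dbl at h
    rw [lt_div_iff₀ (by positivity)] at h
    exact h
  have bad10 : (K - (1/100)*k) * (q*r) < ((A1+B0).card : ℝ) := by
    have h := hbad A1 B0 (Finset.filter_subset _ _) (Finset.filter_subset _ _) sA1 sB0
    unfold Dbl at h
    rw [lt_div_iff₀ (by positivity)] at h
    exact h
  have hne1 : u + v ≠ w + v := hw ▸ zadd1 u v
  have hsum1 : ((A0+B0).card : ℝ) + ((A1+B0).card:ℝ) ≤ ((A+B).card:ℝ) := by
    exact_mod_cast sum_card_le A B ξ u v w v hne1
  have hI : (K - (1/100)*k) * (p*r) + (K - (1/100)*k) * (q*r) < k^2 * ρ := by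
    rw [hk2]
    linarith only [bad00, bad10, hsum1, hABcard]
  have hqp : q ≤ p := by
    rw [hpdef, hqdef]
    exact Real.sqrt_le_sqrt (by linarith)
  have hsr : s ≤ r := by
    rw [hrdef, hsdef]
    exact Real.sqrt_le_sqrt (by exact_mod_cast hBle)
  have hK'eq : K - (1/100)*k = k^2 - k/100 := by rw [hk2]; ring
  by_cases hc : (1/20) * K ^ (-10:ℝ) * B.card ≤ (B1.card:ℝ)
  · -- all four pairs usable
    have b1pos : (0:ℝ) < (B1.card:ℝ) := lt_of_lt_of_le hszb hc
    have bad01 : (K - (1/100)*k) * (p*s) < ((A0+B1).card : ℝ) := by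
      have h := hbad A0 B1 (Finset.filter_subset _ _) (Finset.filter_subset _ _) sA0 hc
      unfold Dbl at h
      rw [lt_div_iff₀ (by positivity)] at h
      exact h
    have hne2 : u + v ≠ u + v' := hv' ▸ zadd2 u v
    have hsum2 : ((A0+B0).card : ℝ) + ((A0+B1).card:ℝ) ≤ ((A+B).card:ℝ) := by
      exact_mod_cast sum_card_le A B ξ u v u v' hne2
    have hII : (K - (1/100)*k) * (p*r) + (K - (1/100)*k) * (p*s) < k^2 * ρ := by
      rw [hk2]
      linarith only [bad00, bad01, hsum2, hABcard]
    exact arithMain k (K - (1/100)*k) A.card B.card p q r s ρ hk1 hK'eq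
      hp0 hq0 hr0 hs0 (by rw [hp2, hq2]; exact haa) (by rw [hr2, hs2]; exact hbb)
      hqp hsr apos bpos hρ hρ0
      (by rw [hp2, hq2]; exact hloA) (by rw [hp2, hq2]; exact hhi) hI hII
  · -- B1 small
    push_neg at hc
    have hb0big : (19/20) * (B.card:ℝ) ≤ (B0.card:ℝ) := by
      nlinarith only [hc, hbb, hKb, bpos]
    have hpq : (4358/10000)*(A.card:ℝ) ≤ 2*(p*q) :=
      twopq A.card p q hp0 hq0 (by rw [hp2, hq2]; exact haa) apos
        (by rw [hp2, hq2]; exact hhi) (by rw [hp2, hq2]; exact hD0.le)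
    have e : ((p+q)*r)^2 = ((p^2+q^2) + 2*(p*q))*r^2 := by ring
    have hbig : (1364/1000)*((A.card:ℝ)*(B.card:ℝ)) ≤ ((p+q)*r)^2 := by
      rw [e, hp2, hq2, hr2, haa]
      nlinarith only [hpq, hb0big, apos, bpos,
        mul_nonneg (by linarith : (0:ℝ) ≤ 2*(p*q) - (4358/10000)*(A.card:ℝ)) b0pos.le,
        mul_nonneg (by linarith : (0:ℝ) ≤ (B0.card:ℝ) - (19/20)*(B.card:ℝ)) apos.le]
    have hI' : (K - (1/100)*k) * ((p+q)*r) < k^2 * ρ := by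
      have e2 : (K - (1/100)*k) * ((p+q)*r)
          = (K - (1/100)*k) * (p*r) + (K - (1/100)*k) * (q*r) := by ring
      rw [e2]; exact hI
    exact arithEnd k (K - (1/100)*k) A.card B.card ((p+q)*r) ρ hk1 hK'eq
      apos bpos hρ hρ0 (by positivity) hbig hI'

lemma mainS2 {n : ℕ} (K : ℝ) (A B : Finset (Fin n → ZMod 2)) (ξ : Fin n → ZMod 2)
    (u w v v' : ZMod 2) (hw : w = u + 1) (hv' : v' = v + 1)
    (hK : 1 ≤ K) (hA : A.Nonempty) (hB : B.Nonempty)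
    (hDbl : Dbl A B ≤ K)
    (hbad : ∀ A' B', A' ⊆ A → B' ⊆ B →
      (1/20) * K ^ (-10:ℝ) * A.card ≤ A'.card →
      (1/20) * K ^ (-10:ℝ) * B.card ≤ B'.card →
      K - (1/100) * Real.sqrt K < Dbl A' B')
    (hBle : ((B.filter fun x => dotp ξ x = v').card : ℝ) ≤ (B.filter fun x => dotp ξ x = v).card)
    (h9A : (9/10) * A.card ≤
      ((A.filter fun x => dotp ξ x = u).card : ℝ) - (A.filter fun x => dotp ξ x = w).card)
    (hBhi : ((B.filter fun x => dotp ξ x = v).card : ℝ) - (B.filter fun x => dotp ξ x = v').card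
      < (9/10) * B.card) : False := by
  set A0 := A.filter (fun x => dotp ξ x = u) with hA0def
  set A1 := A.filter (fun x => dotp ξ x = w) with hA1def
  set B0 := B.filter (fun x => dotp ξ x = v) with hB0def
  set B1 := B.filter (fun x => dotp ξ x = v') with hB1def
  have haa : (A0.card : ℝ) + A1.card = A.card := by
    rw [hA0def, hA1def, hw]; exact_mod_cast part_card A ξ u
  have hbb : (B0.card : ℝ) + B1.card = B.card := by
    rw [hB0def, hB1def, hv']; exact_mod_cast part_card B ξ v
  have apos : (0:ℝ) < A.card := by exact_mod_cast Finset.card_pos.2 hA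
  have bpos : (0:ℝ) < B.card := by exact_mod_cast Finset.card_pos.2 hB
  have hK0 : (0:ℝ) < K := lt_of_lt_of_le one_pos hK
  set k := Real.sqrt K with hkdef
  have hk2 : k^2 = K := Real.sq_sqrt hK0.le
  have hk0 : (0:ℝ) ≤ k := Real.sqrt_nonneg K
  have hk1 : (1:ℝ) ≤ k := by nlinarith only [hk2, hk0, hK]
  have hKpow1 : K ^ (-10:ℝ) ≤ 1 := Real.rpow_le_one_of_one_le_of_nonpos hK (by norm_num)
  have hKpow0 : 0 < K ^ (-10:ℝ) := Real.rpow_pos_of_pos hK0 _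
  have hKa := mul_le_mul_of_nonneg_right hKpow1 apos.le
  have hKb := mul_le_mul_of_nonneg_right hKpow1 bpos.le
  have sA0 : (1/20) * K ^ (-10:ℝ) * A.card ≤ (A0.card:ℝ) := by
    nlinarith only [hKa, apos, haa, h9A]
  have sB0 : (1/20) * K ^ (-10:ℝ) * B.card ≤ (B0.card:ℝ) := by
    nlinarith only [hKb, bpos, hbb, hBle]
  have sB1 : (1/20) * K ^ (-10:ℝ) * B.card ≤ (B1.card:ℝ) := by
    nlinarith only [hKb, bpos, hbb, hBhi]
  have hsz : (0:ℝ) < (1/20) * K ^ (-10:ℝ) * A.card := by positivity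
  have hszb : (0:ℝ) < (1/20) * K ^ (-10:ℝ) * B.card := by positivity
  have a0pos : (0:ℝ) < (A0.card:ℝ) := lt_of_lt_of_le hsz sA0
  have b0pos : (0:ℝ) < (B0.card:ℝ) := lt_of_lt_of_le hszb sB0
  have b1pos : (0:ℝ) < (B1.card:ℝ) := lt_of_lt_of_le hszb sB1
  set p := Real.sqrt (A0.card:ℝ) with hpdef
  set r := Real.sqrt (B0.card:ℝ) with hrdef
  set s := Real.sqrt (B1.card:ℝ) with hsdef
  have hp2 : p^2 = (A0.card:ℝ) := Real.sq_sqrt (by positivity)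
  have hr2 : r^2 = (B0.card:ℝ) := Real.sq_sqrt (by positivity)
  have hs2 : s^2 = (B1.card:ℝ) := Real.sq_sqrt (by positivity)
  have hp0 : 0 ≤ p := Real.sqrt_nonneg _
  have hr0 : 0 ≤ r := Real.sqrt_nonneg _
  have hs0 : 0 ≤ s := Real.sqrt_nonneg _
  set ρ := Real.sqrt (A.card:ℝ) * Real.sqrt (B.card:ℝ) with hρdef
  have hρ : ρ^2 = (A.card:ℝ) * (B.card:ℝ) := by
    rw [hρdef, mul_pow, Real.sq_sqrt apos.le, Real.sq_sqrt bpos.le]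
  have hρ0 : 0 ≤ ρ := by positivity
  have hABcard : ((A+B).card:ℝ) ≤ K * ρ := by
    have h := hDbl
    unfold Dbl at h
    rw [div_le_iff₀ (by positivity)] at h
    exact h
  have bad00 : (K - (1/100)*k) * (p*r) < ((A0+B0).card : ℝ) := by
    have h := hbad A0 B0 (Finset.filter_subset _ _) (Finset.filter_subset _ _) sA0 sB0
    unfold Dbl at h
    rw [lt_div_iff₀ (by positivity)] at h
    exact h
  have bad01 : (K - (1/100)*k) * (p*s) < ((A0+B1).card : ℝ) := by
    have h := hbad A0 B1 (Finset.filter_subset _ _) (Finset.filter_subset _ _) sA0 sB1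
    unfold Dbl at h
    rw [lt_div_iff₀ (by positivity)] at h
    exact h
  have hne2 : u + v ≠ u + v' := hv' ▸ zadd2 u v
  have hsum2 : ((A0+B0).card : ℝ) + ((A0+B1).card:ℝ) ≤ ((A+B).card:ℝ) := by
    exact_mod_cast sum_card_le A B ξ u v u v' hne2
  have hII : (K - (1/100)*k) * (p*r) + (K - (1/100)*k) * (p*s) < k^2 * ρ := by
    rw [hk2]
    linarith only [bad00, bad01, hsum2, hABcard]
  have hK'eq : K - (1/100)*k = k^2 - k/100 := by rw [hk2]; ring
  have hDb0 : (0:ℝ) ≤ r^2 - s^2 := by rw [hr2, hs2]; linarith [hBle]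
  have hrs : (4358/10000)*(B.card:ℝ) ≤ 2*(r*s) :=
    twopq B.card r s hr0 hs0 (by rw [hr2, hs2]; exact hbb) bpos
      (by rw [hr2, hs2]; exact hBhi) hDb0
  have ha095 : (19/20) * (A.card:ℝ) ≤ (A0.card:ℝ) := by linarith [h9A, haa]
  have e : (p*(r+s))^2 = p^2*((r^2+s^2) + 2*(r*s)) := by ring
  have hbig : (1364/1000)*((A.card:ℝ)*(B.card:ℝ)) ≤ (p*(r+s))^2 := by
    rw [e, hp2, hr2, hs2, hbb]
    nlinarith only [hrs, ha095, apos, bpos,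
      mul_nonneg (by linarith : (0:ℝ) ≤ 2*(r*s) - (4358/10000)*(B.card:ℝ)) a0pos.le,
      mul_nonneg (by linarith : (0:ℝ) ≤ (A0.card:ℝ) - (19/20)*(A.card:ℝ)) bpos.le]
  have hII' : (K - (1/100)*k) * (p*(r+s)) < k^2 * ρ := by
    have e2 : (K - (1/100)*k) * (p*(r+s))
        = (K - (1/100)*k) * (p*r) + (K - (1/100)*k) * (p*s) := by ring
    rw [e2]; exact hII
  exact arithEnd k (K - (1/100)*k) A.card B.card (p*(r+s)) ρ hk1 hK'eq
    apos bpos hρ hρ0 (by positivity) hbig hII'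

lemma runS1 {n : ℕ} (K : ℝ) (A B : Finset (Fin n → ZMod 2)) (ξ : Fin n → ZMod 2)
    (hK : 1 ≤ K) (hA : A.Nonempty) (hB : B.Nonempty)
    (hDbl : Dbl A B ≤ K)
    (hbad : ∀ A' B', A' ⊆ A → B' ⊆ B →
      (1/20) * K ^ (-10:ℝ) * A.card ≤ A'.card →
      (1/20) * K ^ (-10:ℝ) * B.card ≤ B'.card →
      K - (1/100) * Real.sqrt K < Dbl A' B')
    (hSpecLo : ξ ∈ Spec (1 / Real.sqrt (2*K)) A)
    (hSpecHi : ξ ∉ Spec (9/10) A) : False := by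
  rw [spec_iff] at hSpecLo hSpecHi
  replace hSpecHi := not_le.mp hSpecHi
  rcases le_total ((A.filter fun x => dotp ξ x = (1:ZMod 2)).card : ℝ)
      ((A.filter fun x => dotp ξ x = (0:ZMod 2)).card : ℝ) with hA01 | hA01 <;>
    rcases le_total ((B.filter fun x => dotp ξ x = (1:ZMod 2)).card : ℝ)
      ((B.filter fun x => dotp ξ x = (0:ZMod 2)).card : ℝ) with hB01 | hB01
  · rw [abs_of_nonneg (by linarith)] at hSpecLo hSpecHi
    exact mainS1 K A B ξ 0 1 0 1 (by decide) (by decide) hK hA hB hDbl hbad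
      hB01 hSpecLo hSpecHi
  · rw [abs_of_nonneg (by linarith)] at hSpecLo hSpecHi
    exact mainS1 K A B ξ 0 1 1 0 (by decide) (by decide) hK hA hB hDbl hbad
      hB01 hSpecLo hSpecHi
  · rw [abs_of_nonpos (by linarith)] at hSpecLo hSpecHi
    exact mainS1 K A B ξ 1 0 0 1 (by decide) (by decide) hK hA hB hDbl hbad
      hB01 (by linarith) (by linarith)
  · rw [abs_of_nonpos (by linarith)] at hSpecLo hSpecHi
    exact mainS1 K A B ξ 1 0 1 0 (by decide) (by decide) hK hA hB hDbl hbad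
      hB01 (by linarith) (by linarith)

lemma runS2 {n : ℕ} (K : ℝ) (A B : Finset (Fin n → ZMod 2)) (ξ : Fin n → ZMod 2)
    (hK : 1 ≤ K) (hA : A.Nonempty) (hB : B.Nonempty)
    (hDbl : Dbl A B ≤ K)
    (hbad : ∀ A' B', A' ⊆ A → B' ⊆ B →
      (1/20) * K ^ (-10:ℝ) * A.card ≤ A'.card →
      (1/20) * K ^ (-10:ℝ) * B.card ≤ B'.card →
      K - (1/100) * Real.sqrt K < Dbl A' B')
    (hSpecA : ξ ∈ Spec (9/10) A)
    (hSpecB : ξ ∉ Spec (9/10) B) : False := by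
  rw [spec_iff] at hSpecA hSpecB
  replace hSpecB := not_le.mp hSpecB
  rcases le_total ((A.filter fun x => dotp ξ x = (1:ZMod 2)).card : ℝ)
      ((A.filter fun x => dotp ξ x = (0:ZMod 2)).card : ℝ) with hA01 | hA01 <;>
    rcases le_total ((B.filter fun x => dotp ξ x = (1:ZMod 2)).card : ℝ)
      ((B.filter fun x => dotp ξ x = (0:ZMod 2)).card : ℝ) with hB01 | hB01
  · rw [abs_of_nonneg (by linarith)] at hSpecA
    rw [abs_of_nonneg (by linarith)] at hSpecB
    exact mainS2 K A B ξ 0 1 0 1 (by decide) (by decide) hK hA hB hDbl hbad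
      hB01 hSpecA hSpecB
  · rw [abs_of_nonneg (by linarith)] at hSpecA
    rw [abs_of_nonpos (by linarith)] at hSpecB
    exact mainS2 K A B ξ 0 1 1 0 (by decide) (by decide) hK hA hB hDbl hbad
      hB01 hSpecA (by linarith)
  · rw [abs_of_nonpos (by linarith)] at hSpecA
    rw [abs_of_nonneg (by linarith)] at hSpecB
    exact mainS2 K A B ξ 1 0 0 1 (by decide) (by decide) hK hA hB hDbl hbad
      hB01 (by linarith) hSpecB
  · rw [abs_of_nonpos (by linarith)] at hSpecA
    rw [abs_of_nonpos (by linarith)] at hSpecB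
    exact mainS2 K A B ξ 1 0 1 0 (by decide) (by decide) hK hA hB hDbl hbad
      hB01 (by linarith) (by linarith)

/-- (A₁,A₂,A₃,A₄) is coherently δ-flat. -/
def CohFlat {n : ℕ} (δ : ℝ) (A1 A2 A3 A4 : Finset (Fin n → ZMod 2)) : Prop :=
  ∀ ξ : Fin n → ZMod 2,
    (ξ ∈ Spec (9 / 10) A1 ∧ ξ ∈ Spec (9 / 10) A2 ∧
      ξ ∈ Spec (9 / 10) A3 ∧ ξ ∈ Spec (9 / 10) A4) ∨
    (ξ ∉ Spec δ A1 ∧ ξ ∉ Spec δ A2 ∧ ξ ∉ Spec δ A3 ∧ ξ ∉ Spec δ A4)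

theorem stmt_17 :
    ∃ c : ℝ, 0 < c ∧
      ∀ (n : ℕ) (K : ℝ) (A B : Finset (Fin n → ZMod 2)),
        1 ≤ K → A.Nonempty → B.Nonempty → Dbl A B ≤ K →
        ¬ CohFlat (1 / Real.sqrt (2 * K)) A B A B →
        ∃ A' B' : Finset (Fin n → ZMod 2), A' ⊆ A ∧ B' ⊆ B ∧
          c * K ^ (-10 : ℝ) * A.card ≤ A'.card ∧
          c * K ^ (-10 : ℝ) * B.card ≤ B'.card ∧
          Dbl A' B' ≤ K - (1 / 100) * Real.sqrt K := by
  refine ⟨1/20, by norm_num, ?_⟩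
  intro n K A B hK hA hB hDbl hNC
  by_contra hcon
  push_neg at hcon
  unfold CohFlat at hNC
  push_neg at hNC
  obtain ⟨ξ, h1, h2⟩ := hNC
  have h9 : ξ ∉ Spec (9/10) A ∨ ξ ∉ Spec (9/10) B := by tauto
  have hδ : ξ ∈ Spec (1 / Real.sqrt (2*K)) A ∨ ξ ∈ Spec (1 / Real.sqrt (2*K)) B := by tauto
  have hbad' : ∀ B' A', B' ⊆ B → A' ⊆ A →
      (1/20) * K ^ (-10:ℝ) * B.card ≤ B'.card →
      (1/20) * K ^ (-10:ℝ) * A.card ≤ A'.card →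
      K - (1/100) * Real.sqrt K < Dbl B' A' := by
    intro B' A' hB' hA' s1 s2
    rw [Dbl_comm]
    exact hcon A' B' hA' hB' s2 s1
  have hDbl' : Dbl B A ≤ K := by rw [Dbl_comm]; exact hDbl
  rcases hδ with hδA | hδB
  · by_cases h9A : ξ ∈ Spec ((9:ℝ)/10) A
    · rcases h9 with h | h9B
      · exact h h9A
      · exact runS2 K A B ξ hK hA hB hDbl hcon h9A h9B
    · exact runS1 K A B ξ hK hA hB hDbl hcon hδA h9A
  · by_cases h9B : ξ ∈ Spec ((9:ℝ)/10) B
    · rcases h9 with h9A | h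
      · exact runS2 K B A ξ hK hB hA hDbl' hbad' h9B h9A
      · exact h h9B
    · exact runS1 K B A ξ hK hB hA hDbl' hbad' hδB h9B
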